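/- Let V be a finite set, let r, r', R, R' ∈ ℝ^V, and let b̄ ∈ ℝ with 0 ≤ b̄ ≤ 1. Assume R_v ≥ 1 for every v ∈ V and r'_v = b̄ · R'_v for every v ∈ V. Define x ∈ ℝ^V by x_v := r_v / R_v. Then ‖x − b̄𝟏‖ ≤ ‖r − r'‖ + ‖R − R'‖, where ‖·‖ is the Euclidean norm on ℝ^V and 𝟏 is the all-ones vector. -/
import Mathlib


open Finset

/-- The Euclidean (ℓ2) norm of a vector indexed by a finite type. -/
noncomputable def evnorm {ι : Type*} [Fintype ι] (x : ι → ℝ) : ℝ :=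
  Real.sqrt (∑ i, x i ^ 2)

lemma evnorm_eq_norm {ι : Type*} [Fintype ι] (x : ι → ℝ) :
    evnorm x = ‖(WithLp.equiv 2 (ι → ℝ)).symm x‖ := by
  rw [EuclideanSpace.norm_eq]
  simp [evnorm, sq_abs]

lemma evnorm_mono {ι : Type*} [Fintype ι] {a d : ι → ℝ}
    (h : ∀ i, |a i| ≤ d i) : evnorm a ≤ evnorm d := by
  apply Real.sqrt_le_sqrt
  apply Finset.sum_le_sum
  intro i _
  calc a i ^ 2 = |a i| ^ 2 := (sq_abs _).symm
    _ ≤ d i ^ 2 := by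
        have := h i
        have h0 : (0:ℝ) ≤ |a i| := abs_nonneg _
        nlinarith

lemma evnorm_abs {ι : Type*} [Fintype ι] (a : ι → ℝ) :
    evnorm (fun i => |a i|) = evnorm a := by
  simp [evnorm, sq_abs]

lemma evnorm_add_le {ι : Type*} [Fintype ι] (a b : ι → ℝ) :
    evnorm (fun i => a i + b i) ≤ evnorm a + evnorm b := by
  rw [evnorm_eq_norm, evnorm_eq_norm, evnorm_eq_norm]
  have : (WithLp.equiv 2 (ι → ℝ)).symm (fun i => a i + b i) =
      (WithLp.equiv 2 (ι → ℝ)).symm a + (WithLp.equiv 2 (ι → ℝ)).symm b := rfl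
  rw [this]
  exact norm_add_le _ _

/-- error-decomposition inequality. If `R_v ≥ 1`, `0 ≤ b̄ ≤ 1`,
`r'_v = b̄·R'_v` and `x_v := r_v / R_v`, then `‖x − b̄𝟏‖ ≤ ‖r − r'‖ + ‖R − R'‖`. -/
theorem stmt_11 {V : Type*} [Fintype V]
    (r r' R R' : V → ℝ) (bbar : ℝ)
    (hb0 : 0 ≤ bbar) (hb1 : bbar ≤ 1)
    (hR : ∀ v, 1 ≤ R v)
    (hr' : ∀ v, r' v = bbar * R' v)
    (x : V → ℝ) (hx : ∀ v, x v = r v / R v) :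
    evnorm (fun v => x v - bbar) ≤
      evnorm (fun v => r v - r' v) + evnorm (fun v => R v - R' v) := by
  have key : ∀ v, |x v - bbar| ≤ |r v - r' v| + |R v - R' v| := by
    intro v
    have hRv : (1:ℝ) ≤ R v := hR v
    have hRpos : (0:ℝ) < R v := lt_of_lt_of_le one_pos hRv
    have hxv : x v - bbar = ((r v - r' v) + bbar * (R' v - R v)) / R v := by
      rw [hx v, hr' v]
      field_simp
      ring
    rw [hxv, abs_div, abs_of_pos hRpos]
    have h1 : |(r v - r' v) + bbar * (R' v - R v)| ≤
        |r v - r' v| + bbar * |R v - R' v| := by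
      calc |(r v - r' v) + bbar * (R' v - R v)| ≤
          |r v - r' v| + |bbar * (R' v - R v)| := abs_add_le _ _
        _ = |r v - r' v| + bbar * |R v - R' v| := by
            rw [abs_mul, abs_of_nonneg hb0, abs_sub_comm (R' v) (R v)]
    have h2 : |r v - r' v| + bbar * |R v - R' v| ≤
        |r v - r' v| + |R v - R' v| := by
      have := abs_nonneg (R v - R' v)
      nlinarith
    have h3 : |(r v - r' v) + bbar * (R' v - R v)| / R v ≤
        |(r v - r' v) + bbar * (R' v - R v)| :=
      div_le_self (abs_nonneg _) hRv
    linarith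
  calc evnorm (fun v => x v - bbar) ≤
      evnorm (fun v => |r v - r' v| + |R v - R' v|) := evnorm_mono key
    _ ≤ evnorm (fun v => |r v - r' v|) + evnorm (fun v => |R v - R' v|) :=
        evnorm_add_le _ _
    _ = _ := by rw [evnorm_abs, evnorm_abs]
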